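/- For all integers k ≥ 1, 8 · Σ_{p>q>0} binomial(2k, k+p) · binomial(2k, k+q) · (p² - q²) = 16k(2k-1) · { binomial(2k-2, k) · Σ_{p>0} binomial(2k-2, k+p-1) - binomial(2k-2, k-1) · Σ_{p>0} binomial(2k-2, k+p) }. -/

import Mathlib

/-!
Write `A p = C(2k, k+p)` and `c p = C(2k-2, k+p-1)`. Absorption gives
`(k² - p²) A p = 2k(2k-1) c p`, so the summand `A p A q (p² - q²)` equals
`2k(2k-1) (c q A p - c p A q)`, and Pascal's rule twice gives `A p = c (p-1) + 2 c p + c (p+1)`.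
For any sequence `A` of this second-difference form, the triangle sum of `c q A p - c p A q`
has a closed form in the partial sums of `c` (induction on the upper limit); here its
boundary terms vanish because `c k = c (k+1) = 0`. With integer lower index both binomial
identities hold for every `p : ℤ`, so no range conditions are needed.
-/

/-- Binomial coefficient with integer lower index, zero when the index is negative. -/
def ichoose (n : ℕ) (m : ℤ) : ℤ := if 0 ≤ m then n.choose m.toNat else 0

open Finset

lemma ichoose_of_neg (n : ℕ) {m : ℤ} (hm : m < 0) : ichoose n m = 0 := by
  simp [ichoose, not_le.mpr hm]

@[simp] lemma ichoose_natCast (n m : ℕ) : ichoose n m = n.choose m := by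
  simp [ichoose]

lemma ichoose_of_lt {n : ℕ} {m : ℤ} (hm : n < m) : ichoose n m = 0 := by
  lift m to ℕ using by omega
  simp [Nat.choose_eq_zero_of_lt (by exact_mod_cast hm : n < m)]

lemma ichoose_succ_succ (n : ℕ) (m : ℤ) :
    ichoose (n + 1) (m + 1) = ichoose n m + ichoose n (m + 1) := by
  rcases lt_trichotomy m (-1) with hm | rfl | hm
  · simp [ichoose_of_neg _ (by omega : m < 0), ichoose_of_neg _ (by omega : m + 1 < 0)]
  · simp [ichoose]
  · lift m to ℕ using by omega
    norm_cast

lemma ichoose_add_two_add_two (n : ℕ) (m : ℤ) :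
    ichoose (n + 2) (m + 2) = ichoose n m + 2 * ichoose n (m + 1) + ichoose n (m + 2) := by
  rw [show m + 2 = m + 1 + 1 by ring, ichoose_succ_succ, ichoose_succ_succ, ichoose_succ_succ]
  ring

lemma add_one_mul_ichoose_add_one (n : ℕ) (m : ℤ) :
    (m + 1) * ichoose (n + 1) (m + 1) = (n + 1) * ichoose n m := by
  rcases lt_or_ge m 0 with hm | hm
  · rcases eq_or_ne m (-1) with rfl | hm'
    · simp [ichoose_of_neg _ (by omega : (-1 : ℤ) < 0)]
    · simp [ichoose_of_neg _ hm, ichoose_of_neg _ (by omega : m + 1 < 0)]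
  · lift m to ℕ using hm
    norm_cast
    simp only [ichoose_natCast]
    rw [mul_comm]
    exact_mod_cast (Nat.add_one_mul_choose_eq n m).symm

lemma sub_mul_ichoose_succ (n : ℕ) (m : ℤ) :
    (n + 1 - m) * ichoose (n + 1) m = (n + 1) * ichoose n m := by
  rcases lt_or_ge m 0 with hm | hm
  · simp [ichoose_of_neg _ hm]
  rcases lt_or_ge (n : ℤ) m with hnm | hnm
  · rcases eq_or_ne m (n + 1) with rfl | hm'
    · simp [ichoose_of_lt hnm]
    · simp [ichoose_of_lt hnm, ichoose_of_lt (by omega : ((n + 1 : ℕ) : ℤ) < m)]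
  · lift m to ℕ using hm
    have := Nat.choose_mul_succ_eq n m
    have hle : m ≤ n + 1 := by omega
    simp only [ichoose_natCast]
    zify [hle] at this
    linear_combination this.symm

lemma sum_Icc_one_natCast_succ {M : Type*} [AddCommMonoid M] (f : ℤ → M) (m : ℕ) :
    ∑ p ∈ Icc (1 : ℤ) (m + 1 : ℕ), f p = ∑ p ∈ Icc (1 : ℤ) m, f p + f (m + 1) := by
  push_cast
  rw [← insert_Icc_right_eq_Icc_add_one (by omega), sum_insert (by simp), add_comm]

lemma sum_Icc_one_comp_add_one {M : Type*} [AddCommGroup M] (f : ℤ → M) (m : ℕ) :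
    ∑ p ∈ Icc (1 : ℤ) m, f (p + 1) = ∑ p ∈ Icc (1 : ℤ) m, f p - f 1 + f (m + 1) := by
  induction m with
  | zero => simp
  | succ m ih =>
    rw [sum_Icc_one_natCast_succ, sum_Icc_one_natCast_succ, ih]
    push_cast
    abel

lemma sum_Icc_Icc_comm {M : Type*} [AddCommMonoid M] (f : ℤ → ℤ → M) (m : ℤ) :
    ∑ q ∈ Icc 1 m, ∑ p ∈ Icc (q + 1) m, f q p = ∑ p ∈ Icc 1 m, ∑ q ∈ Icc 1 (p - 1), f q p :=
  sum_comm' fun q p => by simp only [mem_Icc]; omega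

theorem sum_Icc_Icc_cross_eq {R : Type*} [CommRing R] (c A : ℤ → R)
    (hA : ∀ p, A p = c (p - 1) + 2 * c p + c (p + 1)) (m : ℕ) :
    ∑ q ∈ Icc (1 : ℤ) m, ∑ p ∈ Icc (q + 1) (m : ℤ), (c q * A p - c p * A q)
      = (c 1 + c (m + 1)) * (∑ p ∈ Icc (1 : ℤ) m, c p - c m)
        - (c 0 + c m) * (∑ p ∈ Icc (1 : ℤ) m, c p - c 1) := by
  rw [sum_Icc_Icc_comm]
  induction m with
  | zero =>
    simp only [Nat.cast_zero, zero_add, Icc_eq_empty_of_lt zero_lt_one, sum_empty]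
    ring
  | succ m ih =>
    have hsumA : ∑ q ∈ Icc (1 : ℤ) m, A q
        = 4 * ∑ p ∈ Icc (1 : ℤ) m, c p + c 0 - c m - c 1 + c (m + 1) := by
      have hdown := sum_Icc_one_comp_add_one (fun p => c (p - 1)) m
      have hup := sum_Icc_one_comp_add_one c m
      simp only [add_sub_cancel_right, sub_self] at hdown
      simp only [hA, sum_add_distrib, ← mul_sum]
      linear_combination hup - hdown
    rw [sum_Icc_one_natCast_succ, ih, sum_Icc_one_natCast_succ, add_sub_cancel_right, sum_sub_distrib,
      ← sum_mul, ← mul_sum, hsumA, hA]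
    push_cast
    rw [add_sub_cancel_right]
    ring

lemma sq_sub_sq_mul_ichoose {k : ℕ} (hk : 1 ≤ k) (p : ℤ) :
    ((k : ℤ) ^ 2 - p ^ 2) * ichoose (2 * k) (k + p)
      = 2 * k * (2 * k - 1) * ichoose (2 * k - 2) (k + p - 1) := by
  obtain ⟨n, rfl⟩ : ∃ n, k = n + 1 := ⟨k - 1, by omega⟩
  have h1 := add_one_mul_ichoose_add_one (2 * n + 1) (n + p)
  have h2 := sub_mul_ichoose_succ (2 * n) (n + p)
  rw [show 2 * (n + 1) = 2 * n + 1 + 1 by ring, show 2 * n + 1 + 1 - 2 = 2 * n by omega]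
  push_cast at h1 h2 ⊢
  rw [show (n : ℤ) + 1 + p = n + p + 1 by ring, show (n : ℤ) + p + 1 - 1 = n + p by ring]
  linear_combination (n + 1 - p) * h1 + (2 * n + 2) * h2

lemma ichoose_two_mul_eq_add_two_mul_add {k : ℕ} (hk : 1 ≤ k) (p : ℤ) :
    ichoose (2 * k) (k + p) = ichoose (2 * k - 2) (k + (p - 1) - 1)
      + 2 * ichoose (2 * k - 2) (k + p - 1) + ichoose (2 * k - 2) (k + (p + 1) - 1) := by
  have h := ichoose_add_two_add_two (2 * k - 2) (k + p - 2)
  rw [show 2 * k - 2 + 2 = 2 * k by omega] at h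
  convert h using 2 <;> ring_nf

theorem stmt12 (k : ℕ) (hk : 1 ≤ k) :
    8 * ∑ q ∈ Finset.Icc (1 : ℤ) k, ∑ p ∈ Finset.Icc (q + 1) k,
          ichoose (2 * k) (k + p) * ichoose (2 * k) (k + q) * (p ^ 2 - q ^ 2)
      = 16 * k * (2 * k - 1) *
          (ichoose (2 * k - 2) k * ∑ p ∈ Finset.Icc (1 : ℤ) k, ichoose (2 * k - 2) (k + p - 1)
            - ichoose (2 * k - 2) (k - 1) *
                ∑ p ∈ Finset.Icc (1 : ℤ) k, ichoose (2 * k - 2) (k + p)) := by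
  set c : ℤ → ℤ := fun p => ichoose (2 * k - 2) (k + p - 1)
  let A : ℤ → ℤ := fun p => ichoose (2 * k) (k + p)
  have hterm (q p : ℤ) : A p * A q * (p ^ 2 - q ^ 2) = 2 * k * (2 * k - 1) * (c q * A p - c p * A q) := by
    linear_combination A p * sq_sub_sq_mul_ichoose hk q - A q * sq_sub_sq_mul_ichoose hk p
  have hc_top : c k = 0 ∧ c (k + 1) = 0 :=
    ⟨ichoose_of_lt (by omega), ichoose_of_lt (by omega)⟩
  have hshift : ∑ p ∈ Icc (1 : ℤ) k, ichoose (2 * k - 2) (k + p)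
      = ∑ p ∈ Icc (1 : ℤ) k, c p - c 1 + c (k + 1) := by
    rw [← sum_Icc_one_comp_add_one c k]
    exact sum_congr rfl fun p _ => by simp only [c, ← add_assoc, add_sub_cancel_right]
  have hc_one : c 1 = ichoose (2 * k - 2) k := by simp [c]
  have hc_zero : c 0 = ichoose (2 * k - 2) (k - 1) := by simp [c]
  simp only [A] at hterm
  simp only [hterm, ← mul_sum]
  rw [sum_Icc_Icc_cross_eq c A (ichoose_two_mul_eq_add_two_mul_add hk) k, hshift, hc_top.1, hc_top.2,
    ← hc_one, ← hc_zero]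
  ring
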